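/- arXiv:1202.5548 — 5 statements merged into one kernel-verified Lean document; each statement's English description precedes it below -/
import Mathlib

section
/- If all n_i ≤ 2, or if max_i n_i ≤ 3 and at most one n_i equals 3, then the d-dimensional knight's graph K(n_1,…,n_d) is disconnected (provided it has at least 2 vertices). In particular K(n,2,2,…,2) is disconnected for every n. -/
/-- `d`-dimensional knight's graph on the board `[n 0] × ⋯ × [n (d-1)]`. -/
def Kd (d : ℕ) (n : Fin d → ℕ) : SimpleGraph ((i : Fin d) → Fin (n i)) where
  Adj a b := ∃ i j : Fin d, i ≠ j ∧ Nat.dist (a i).val (b i).val = 1 ∧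
    Nat.dist (a j).val (b j).val = 2 ∧ ∀ k, k ≠ i → k ≠ j → a k = b k
  symm := by
    constructor
    rintro a b ⟨i, j, hij, h1, h2, h3⟩
    exact ⟨i, j, hij, by rw [Nat.dist_comm]; exact h1, by rw [Nat.dist_comm]; exact h2,
      fun k hk hk' => (h3 k hk hk').symm⟩
  loopless := by
    constructor
    rintro a ⟨i, j, hij, h1, _, _⟩
    simp [Nat.dist_self] at h1

/-!
Every knight move changes some coordinate by exactly 2, which is only possible in a direction
of length at least 3. So if all directions but `i₀` have length at most 2, every move changes
coordinate `i₀` by 2 and its parity is an invariant; when `n i₀ ≥ 2` both parities occur.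
-/

theorem SimpleGraph.Reachable.apply_eq_of_adj {V β : Type*} {G : SimpleGraph V} (f : V → β)
    (hf : ∀ ⦃u v⦄, G.Adj u v → f u = f v) {u v : V} (h : G.Reachable u v) : f u = f v := by
  simpa [Relation.reflTransGen_eq_self] using
    ((G.reachable_iff_reflTransGen u v).1 h).lift f hf

theorem three_le_of_dist_eq_two {m : ℕ} {x y : Fin m} (h : Nat.dist x y = 2) : 3 ≤ m := by
  have := x.isLt; have := y.isLt
  simp only [Nat.dist] at h
  omega

theorem mod_two_eq_of_dist_eq_two {x y : ℕ} (h : Nat.dist x y = 2) : x % 2 = y % 2 := by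
  simp only [Nat.dist] at h
  omega

namespace Kd

variable {d : ℕ} {n : Fin d → ℕ}

theorem exists_dist_eq_two_of_adj {a b : (i : Fin d) → Fin (n i)} (h : (Kd d n).Adj a b) :
    ∃ j, Nat.dist (a j : ℕ) (b j) = 2 := by
  obtain ⟨-, j, -, -, hj, -⟩ := h
  exact ⟨j, hj⟩

theorem mod_two_eq_of_adj {i₀ : Fin d} (hle : ∀ j ≠ i₀, n j ≤ 2)
    {a b : (i : Fin d) → Fin (n i)} (h : (Kd d n).Adj a b) :
    (a i₀ : ℕ) % 2 = (b i₀ : ℕ) % 2 := by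
  obtain ⟨j, hj⟩ := exists_dist_eq_two_of_adj h
  obtain rfl : j = i₀ := by
    by_contra hne
    exact absurd (three_le_of_dist_eq_two hj) (by have := hle j hne; omega)
  exact mod_two_eq_of_dist_eq_two hj

theorem not_connected_of_le_two {i₀ : Fin d} (h₀ : 2 ≤ n i₀) (hle : ∀ j ≠ i₀, n j ≤ 2) :
    ¬ (Kd d n).Connected := by
  intro hc
  obtain ⟨v⟩ := hc.nonempty
  have hpar := (hc.preconnected (Function.update v i₀ ⟨0, by omega⟩)
    (Function.update v i₀ ⟨1, by omega⟩)).apply_eq_of_adj _ fun _ _ => mod_two_eq_of_adj hle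
  simp at hpar

end Kd

/-- If all dimensions are at most 2, or all are at most 3 with at most one equal
to 3, then the knight's graph (with at least two vertices) is disconnected.
In particular K(n,2,2,…,2) is disconnected for every n. -/
theorem knight_disconnected_small :
    (∀ (d : ℕ) (n : Fin d → ℕ),
      ((∀ i, n i ≤ 2) ∨ ((∀ i, n i ≤ 3) ∧ {i | n i = 3}.Subsingleton)) →
      1 < Fintype.card ((i : Fin d) → Fin (n i)) →
      ¬ (Kd d n).Connected) ∧
    (∀ (d N : ℕ), 2 ≤ d →
      ¬ (Kd d (fun i => if (i : ℕ) = 0 then N else 2)).Connected) := by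
  constructor
  · intro d n hn hcard
    obtain ⟨x, y, hxy⟩ := Fintype.exists_pair_of_one_lt_card hcard
    obtain ⟨i₁, hi₁⟩ := Function.ne_iff.1 hxy
    have h₁ : 2 ≤ n i₁ := Fin.nontrivial_iff_two_le.1 (nontrivial_of_ne _ _ hi₁)
    by_cases h₃ : ∃ i₀, n i₀ = 3
    · obtain ⟨i₀, hi₀⟩ := h₃
      refine Kd.not_connected_of_le_two (i₀ := i₀) (by omega) fun j hj => ?_
      rcases hn with hle | ⟨hle, hsub⟩
      · exact hle j
      · have := hle j; have : n j ≠ 3 := fun h => hj (hsub h hi₀); omega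
    · push Not at h₃
      refine Kd.not_connected_of_le_two h₁ fun j _ => ?_
      rcases hn with hle | ⟨hle, -⟩
      · exact hle j
      · have := hle j; have := h₃ j; omega
  · intro d N hd
    rcases Nat.lt_or_ge 2 N with hN | hN
    · exact Kd.not_connected_of_le_two (i₀ := ⟨0, by omega⟩) (by simp only [↓reduceIte]; omega)
        fun j hj => by simp only [ne_eq, Fin.ext_iff] at hj; simp [hj]
    · refine Kd.not_connected_of_le_two (i₀ := ⟨1, hd⟩) (by simp) fun j _ => ?_
      split_ifs <;> omega
end

section
/- The knight's graph K(4,4) has no Hamiltonian cycle, but the 3-dimensional knight's graph K(4,4,2) has a Hamiltonian cycle. -/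
instance (d : ℕ) (n : Fin d → ℕ) : DecidableRel (Kd d n).Adj := fun a b =>
  inferInstanceAs (Decidable (∃ i j : Fin d, i ≠ j ∧ Nat.dist (a i).val (b i).val = 1 ∧
    Nat.dist (a j).val (b j).val = 2 ∧ ∀ k, k ≠ i → k ≠ j → a k = b k))

namespace SimpleGraph.Walk

variable {V : Type*} {G : SimpleGraph V}

theorem mem_of_mem_support_of_toSubgraph_adj_closed {S : Set V} {u v : V} (p : G.Walk u v)
    (hu : u ∈ S) (hS : ∀ x ∈ S, ∀ y, p.toSubgraph.Adj x y → y ∈ S) :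
    ∀ x ∈ p.support, x ∈ S := by
  induction p with
  | nil => simpa using hu
  | @cons u w _ h q ih =>
    have hw : w ∈ S := hS u hu w (by simp)
    simp only [support_cons, List.mem_cons]
    rintro x (rfl | hx)
    · exact hu
    · exact ih hw (fun y hy z hyz => hS y hy z (by simp [hyz])) x hx

theorem IsHamiltonianCycle.eq_univ_of_neighborSet_eq_pair [DecidableEq V] {v u u' a b : V}
    {p : G.Walk v v} (hp : p.IsHamiltonianCycle) (huu' : u ≠ u')
    (hu : G.neighborSet u = {a, b}) (hu' : G.neighborSet u' = {a, b}) :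
    ({u, u', a, b} : Set V) = Set.univ := by
  set H := p.toSubgraph
  have hdeg (w : V) : (H.neighborSet w).ncard = 2 :=
    hp.isCycle.ncard_neighborSet_toSubgraph_eq_two (hp.mem_support w)
  have hpair_le : ({a, b} : Set V).ncard ≤ 2 :=
    (Set.ncard_insert_le a {b}).trans (by rw [Set.ncard_singleton])
  have hH {w : V} (hw : G.neighborSet w = {a, b}) : H.neighborSet w = {a, b} :=
    Set.eq_of_subset_of_ncard_le (hw ▸ H.neighborSet_subset w) (by rw [hdeg]; exact hpair_le)
      (Set.toFinite _)
  have hback {c : V} (hc : c ∈ ({a, b} : Set V)) : H.neighborSet c = {u, u'} := by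
    refine (Set.eq_of_subset_of_ncard_le (Set.pair_subset ?_ ?_) ?_
      p.finite_neighborSet_toSubgraph).symm
    · exact H.adj_symm (show c ∈ H.neighborSet u from hH hu ▸ hc)
    · exact H.adj_symm (show c ∈ H.neighborSet u' from hH hu' ▸ hc)
    · rw [hdeg, Set.ncard_pair huu']
  have hclosed :
      ∀ x ∈ ({u, u', a, b} : Set V), ∀ y, H.Adj x y → y ∈ ({u, u', a, b} : Set V) := by
    rintro x hx y (hxy : y ∈ H.neighborSet x)
    rcases hx with rfl | rfl | hx
    · rw [hH hu] at hxy; exact Or.inr (Or.inr hxy)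
    · rw [hH hu'] at hxy; exact Or.inr (Or.inr hxy)
    · rw [hback hx] at hxy
      rcases hxy with rfl | rfl <;> simp
  set c := p.rotate u (hp.mem_support u)
  have hc : c.IsHamiltonianCycle := (isHamiltonianCycle_rotate _).mpr hp
  refine Set.eq_univ_of_forall fun x ↦
    c.mem_of_mem_support_of_toSubgraph_adj_closed (by simp) ?_ x (hc.mem_support x)
  rwa [toSubgraph_rotate]

end SimpleGraph.Walk

-- `![4, 4] i` does not reduce for a variable `i`, so `![x, y]` would not have the board type.
def cell2 (x y : Fin 4) : (i : Fin 2) → Fin (![4, 4] i) :=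
  Fin.cons x (Fin.cons y finZeroElim)

def cell3 (x y : Fin 4) (z : Fin 2) : (i : Fin 3) → Fin (![4, 4, 2] i) :=
  Fin.cons x (Fin.cons y (Fin.cons z finZeroElim))

theorem Kd44_neighborSet_cell2_0_0 :
    (Kd 2 ![4, 4]).neighborSet (cell2 0 0) = {cell2 1 2, cell2 2 1} := by
  ext x
  simp only [SimpleGraph.mem_neighborSet, Set.mem_insert_iff, Set.mem_singleton_iff]
  revert x; decide

theorem Kd44_neighborSet_cell2_3_3 :
    (Kd 2 ![4, 4]).neighborSet (cell2 3 3) = {cell2 1 2, cell2 2 1} := by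
  ext x
  simp only [SimpleGraph.mem_neighborSet, Set.mem_insert_iff, Set.mem_singleton_iff]
  revert x; decide

def tour442 : (Kd 3 ![4, 4, 2]).Walk (cell3 0 0 0) (cell3 0 0 0) :=
  SimpleGraph.Walk.ofSupport
    ([(0,0,0), (0,2,1), (1,0,1), (3,0,0), (2,2,0), (0,3,0), (2,3,1), (3,1,1), (1,1,0), (1,3,1),
      (3,3,0), (1,2,0), (3,2,1), (2,0,1), (0,1,1), (2,2,1), (0,3,1), (0,1,0), (2,0,0), (0,0,1),
      (2,1,1), (2,3,0), (0,2,0), (1,0,0), (1,2,1), (3,2,0), (3,0,1), (1,1,1), (3,1,0), (3,3,1),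
      (1,3,0), (2,1,0), (0,0,0)].map fun (x, y, z) => cell3 x y z)
    (by simp) (by decide)

theorem tour442_isHamiltonianCycle : tour442.IsHamiltonianCycle := by
  rw [SimpleGraph.Walk.isHamiltonianCycle_iff_isCycle_and_length_eq,
    SimpleGraph.Walk.isCycle_iff_isPath_tail_and_le_length, SimpleGraph.Walk.isPath_def]
  exact ⟨⟨by decide, by decide⟩, by decide⟩

/-- K(4,4) has no Hamiltonian cycle, but K(4,4,2) does. -/
theorem K44_not_tourable_K442_tourable :
    (¬ ∃ (v : (i : Fin 2) → Fin (![4, 4] i)) (w : (Kd 2 ![4, 4]).Walk v v),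
        w.IsHamiltonianCycle) ∧
    (∃ (v : (i : Fin 3) → Fin (![4, 4, 2] i)) (w : (Kd 3 ![4, 4, 2]).Walk v v),
        w.IsHamiltonianCycle) := by
  refine ⟨?_, ⟨_, tour442, tour442_isHamiltonianCycle⟩⟩
  rintro ⟨v, w, hw⟩
  have hcover := hw.eq_univ_of_neighborSet_eq_pair (by decide) Kd44_neighborSet_cell2_0_0
    Kd44_neighborSet_cell2_3_3
  have hmissed : cell2 0 1 ∉ ({cell2 0 0, cell2 3 3, cell2 1 2, cell2 2 1} : Set _) := by
    simp only [Set.mem_insert_iff, Set.mem_singleton_iff]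
    decide
  exact hmissed (hcover ▸ Set.mem_univ _)
end

section
/- The 3-dimensional knight's graph K(4,2,2) has no Hamiltonian cycle. -/
namespace Kd

variable {d : ℕ} {n : Fin d → ℕ} {i : Fin d}

lemma val_mod_two_eq_of_adj (hn : ∀ k ≠ i, n k ≤ 2) {a b : (k : Fin d) → Fin (n k)}
    (h : (Kd d n).Adj a b) : (a i).val % 2 = (b i).val % 2 := by
  obtain ⟨-, j, -, -, hj, -⟩ := h
  have ha := (a j).isLt
  have hb := (b j).isLt
  unfold Nat.dist at hj
  by_cases hji : j = i
  · subst hji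
    omega
  · have := hn j hji
    omega

lemma val_mod_two_eq_of_reachable (hn : ∀ k ≠ i, n k ≤ 2) {a b : (k : Fin d) → Fin (n k)}
    (h : (Kd d n).Reachable a b) : (a i).val % 2 = (b i).val % 2 := by
  obtain ⟨p⟩ := h
  induction p with
  | nil => rfl
  | cons hadj _ ih => exact (val_mod_two_eq_of_adj hn hadj).trans ih

lemma not_preconnected (hn : ∀ k ≠ i, n k ≤ 2) (hi : 2 ≤ n i) (hpos : ∀ k, 0 < n k) :
    ¬ (Kd d n).Preconnected := by
  intro hconn
  let a : (k : Fin d) → Fin (n k) := fun k => ⟨0, hpos k⟩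
  have hab := val_mod_two_eq_of_reachable hn (hconn a (Function.update a i ⟨1, hi⟩))
  simp [a] at hab

end Kd

/-- K(4,2,2) has no Hamiltonian cycle. -/
theorem K422_not_tourable :
    ¬ ∃ (v : (i : Fin 3) → Fin (![4, 2, 2] i)) (w : (Kd 3 ![4, 2, 2]).Walk v v),
      w.IsHamiltonianCycle := by
  rintro ⟨v, w, hw⟩
  have hG : (Kd 3 ![4, 2, 2]).IsHamiltonian := fun _ => ⟨v, w, hw⟩
  exact Kd.not_preconnected (i := 0) (by decide) (by decide) (by decide) hG.connected.preconnected
end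

section
/- If the knight's graph K(n_1,…,n_d) has a Hamiltonian cycle containing two edge-disjoint sites, then for every p ≥ 1 the knight's graph K(n_1,…,n_d,p) has a Hamiltonian cycle containing two edge-disjoint sites. -/
/-- Two points of the board agreeing in all coordinates except one, in which
they differ by exactly 2. -/
def TwoApart {d : ℕ} {n : Fin d → ℕ} (u v : (i : Fin d) → Fin (n i)) : Prop :=
  ∃ j, Nat.dist (u j).val (v j).val = 2 ∧ ∀ k, k ≠ j → u k = v k

/-- A site of a closed walk: two distinct edges of the walk whose corresponding
endpoints are two apart. -/
def IsSite {d : ℕ} {n : Fin d → ℕ} {v : (i : Fin d) → Fin (n i)}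
    (w : (Kd d n).Walk v v) (a₁ a₂ c₁ c₂ : (i : Fin d) → Fin (n i)) : Prop :=
  s(a₁, a₂) ∈ w.edges ∧ s(c₁, c₂) ∈ w.edges ∧ s(a₁, a₂) ≠ s(c₁, c₂) ∧
    TwoApart a₁ c₁ ∧ TwoApart a₂ c₂

/-- The knights graph has a Hamiltonian cycle containing two edge-disjoint sites. -/
def HasBiSitedTour (d : ℕ) (n : Fin d → ℕ) : Prop :=
  ∃ (v : (i : Fin d) → Fin (n i)) (w : (Kd d n).Walk v v),
    w.IsHamiltonianCycle ∧
    ∃ a₁ a₂ c₁ c₂ b₁ b₂ e₁ e₂,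
      IsSite w a₁ a₂ c₁ c₂ ∧ IsSite w b₁ b₂ e₁ e₂ ∧
      ({s(a₁, a₂), s(c₁, c₂)} ∩ {s(b₁, b₂), s(e₁, e₂)} :
        Set (Sym2 ((i : Fin d) → Fin (n i)))) = ∅

/-!
Stack `p` copies of the tour, one in each layer of the new last coordinate. Let `a₁a₂`, `c₁c₂` be
the first site. As `a₁, c₁` and `a₂, c₂` are two apart, `(ℓ, aᵢ)` and `(ℓ + 1, cᵢ)` are
knight-adjacent, so deleting the copy of `a₁a₂` in layer `ℓ` and that of `c₁c₂` in layer `ℓ + 1`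
and adding these two edges merges the cycles. Only the first site is consumed, so for `p ≥ 2` the
copies of the second site in the bottom and top layers are two edge-disjoint sites of the merged
tour; for `p = 1` the single copy of the tour keeps both sites.
-/

namespace SimpleGraph.Walk

variable {V : Type*} {G : SimpleGraph V}

theorem IsPath.exists_eq_cons_of_mem_edges {u v w : V} {p : G.Walk u v} (hp : p.IsPath)
    (he : s(u, w) ∈ p.edges) : ∃ (h : G.Adj u w) (q : G.Walk w v), p = cons h q := by
  have hnil : ¬p.Nil := edges_eq_nil.not.mp (List.ne_nil_of_mem he)
  obtain rfl := hp.eq_snd_of_mem_edges he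
  exact ⟨_, _, (p.cons_tail_eq hnil).symm⟩

theorem IsCycle.exists_cons_toSubgraph_eq [DecidableEq V] {v x y : V} {C : G.Walk v v}
    (hC : C.IsCycle) (he : s(x, y) ∈ C.edges) :
    ∃ (h : G.Adj x y) (P : G.Walk y x), (cons h P).IsCycle ∧
      (cons h P).toSubgraph = C.toSubgraph := by
  have hx : x ∈ C.support := C.fst_mem_support_of_mem_edges he
  suffices ∀ D : G.Walk x x, D.IsCycle → s(x, y) ∈ D.edges →
      ∃ (h : G.Adj x y) (P : G.Walk y x), (cons h P).IsCycle ∧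
        (cons h P).toSubgraph = D.toSubgraph by
    rw [← C.toSubgraph_rotate hx]
    exact this _ (hC.rotate hx) ((C.rotate_edges x hx).mem_iff.mpr he)
  rintro (_ | ⟨h, q⟩) hD he
  · simp at he
  obtain ⟨hq, hxq⟩ := (cons_isCycle_iff _ _).mp hD
  rw [edges_cons, List.mem_cons] at he
  rcases he with he | he
  · obtain rfl := Sym2.congr_right.mp he
    exact ⟨h, q, hD, rfl⟩
  -- otherwise the edge `xy` is the last one of the cycle, which then starts with it when reversed
  rw [← List.mem_reverse, ← edges_reverse] at he
  obtain ⟨h', q', hq'⟩ := hq.reverse.exists_eq_cons_of_mem_edges he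
  have hrev : cons h' (q'.concat h.symm) = (cons h q).reverse := by
    rw [reverse_cons, hq', cons_append, concat_eq_append]
  exact ⟨h', _, hrev ▸ hD.reverse, by rw [hrev, toSubgraph_reverse]⟩

theorem IsPath.isCycle_cons_append_cons {x₁ x₂ y₁ y₂ : V} {P : G.Walk x₂ x₁}
    {Q : G.Walk y₁ y₂} (hP : P.IsPath) (hQ : Q.IsPath) (hPQ : P.support.Disjoint Q.support)
    (hx : x₁ ≠ x₂) (h₁ : G.Adj x₁ y₁) (h₂ : G.Adj y₂ x₂) :
    (cons h₁ (Q.append (cons h₂ P))).IsCycle := by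
  have hx₁ : x₁ ∈ P.support := P.end_mem_support
  have hy₁ : y₁ ∈ Q.support := Q.start_mem_support
  refine (cons_isCycle_iff _ _).mpr ⟨?_, fun he => ?_⟩
  · rw [isPath_def, support_append, support_cons, List.tail_cons]
    exact List.nodup_append.mpr ⟨hQ.support_nodup, hP.support_nodup,
      fun a ha b hb hab => hPQ (hab ▸ hb) ha⟩
  simp only [edges_append, edges_cons, List.mem_append, List.mem_cons] at he
  rcases he with he | he | he
  · exact hPQ hx₁ (Q.fst_mem_support_of_mem_edges he)
  · rcases Sym2.eq_iff.mp he with ⟨rfl, -⟩ | ⟨rfl, -⟩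
    · exact hPQ hx₁ Q.end_mem_support
    · exact hx rfl
  · exact hPQ (P.snd_mem_support_of_mem_edges he) hy₁

theorem IsCycle.exists_isCycle_merge [DecidableEq V] {u v x₁ x₂ y₁ y₂ : V} {C : G.Walk u u}
    {D : G.Walk v v} (hC : C.IsCycle) (hD : D.IsCycle) (hCD : C.support.Disjoint D.support)
    (hx : s(x₁, x₂) ∈ C.edges) (hy : s(y₁, y₂) ∈ D.edges) (h₁ : G.Adj x₁ y₁)
    (h₂ : G.Adj x₂ y₂) :
    ∃ M : G.Walk x₁ x₁, M.IsCycle ∧ (∀ z, z ∈ M.support ↔ z ∈ C.support ∨ z ∈ D.support) ∧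
      (∀ e ∈ C.edges, e ≠ s(x₁, x₂) → e ∈ M.edges) ∧
      ∀ e ∈ D.edges, e ≠ s(y₁, y₂) → e ∈ M.edges := by
  obtain ⟨hx', P, hPC, hP⟩ := hC.exists_cons_toSubgraph_eq hx
  obtain ⟨hy', Q, hQD, hQ⟩ := hD.exists_cons_toSubgraph_eq (Sym2.eq_swap ▸ hy)
  have mem_support {t a b : V} {W : G.Walk t t} {h : G.Adj a b} {R : G.Walk b a}
      (hR : (cons h R).toSubgraph = W.toSubgraph) (z : V) : z ∈ W.support ↔ z ∈ R.support := by
    rw [← mem_verts_toSubgraph, ← hR, mem_verts_toSubgraph, support_cons, List.mem_cons,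
      or_iff_right_iff_imp]
    rintro rfl
    exact R.end_mem_support
  have mem_edges {t a b : V} {W : G.Walk t t} {h : G.Adj a b} {R : G.Walk b a}
      (hR : (cons h R).toSubgraph = W.toSubgraph) (e : Sym2 V) :
      e ∈ W.edges ↔ e = s(a, b) ∨ e ∈ R.edges := by
    rw [← mem_edges_toSubgraph, ← hR, mem_edges_toSubgraph, edges_cons, List.mem_cons]
  have hPQ : P.support.Disjoint Q.support := fun z hzP hzQ =>
    hCD ((mem_support hP z).mpr hzP) ((mem_support hQ z).mpr hzQ)
  have hPpath := ((cons_isCycle_iff _ _).mp hPC).1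
  have hQpath := ((cons_isCycle_iff _ _).mp hQD).1
  refine ⟨_, hPpath.isCycle_cons_append_cons hQpath hPQ hx'.ne h₁ h₂.symm,
    fun z => ?_, fun e he hne => ?_, fun e he hne => ?_⟩
  · simp only [support_cons, support_append, List.tail_cons, List.mem_cons, List.mem_append,
      mem_support hP, mem_support hQ]
    have := P.end_mem_support
    grind
  · have := (mem_edges hP e).mp he
    simp only [edges_cons, edges_append, List.mem_cons, List.mem_append]
    tauto
  · have := (mem_edges hQ e).mp he
    simp only [edges_cons, edges_append, List.mem_cons, List.mem_append]
    rw [Sym2.eq_swap] at this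
    tauto

theorem IsCycle.isHamiltonianCycle_of_forall_mem_support [DecidableEq V] {v : V} {C : G.Walk v v}
    (hC : C.IsCycle) (h : ∀ z, z ∈ C.support) : C.IsHamiltonianCycle := by
  refine isHamiltonianCycle_iff_isCycle_and_support_count_tail_eq_one.mpr
    ⟨hC, fun z => List.count_eq_one_of_mem hC.support_nodup ?_⟩
  obtain rfl | hz := eq_or_ne z v
  · exact C.end_mem_tail_support hC.not_nil
  · exact List.mem_of_ne_of_mem hz (C.cons_tail_support ▸ h z)

end SimpleGraph.Walk

open SimpleGraph

abbrev Board (d : ℕ) (n : Fin d → ℕ) : Type := (i : Fin d) → Fin (n i)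

section Layers

variable {d : ℕ} {n : Fin d → ℕ} {p : ℕ}

def toLayer (n : Fin d → ℕ) {p : ℕ} (ℓ : Fin p) (x : Board d n) :
    Board (d + 1) (Fin.snoc n p) :=
  Fin.snoc (fun i => Fin.cast (by simp) (x i)) (Fin.cast (by simp) ℓ)

@[simp] lemma toLayer_castSucc (ℓ : Fin p) (x : Board d n) (i : Fin d) :
    (toLayer n ℓ x i.castSucc).val = (x i).val := by
  simp [toLayer]

@[simp] lemma toLayer_last (ℓ : Fin p) (x : Board d n) :
    (toLayer n ℓ x (Fin.last d)).val = ℓ.val := by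
  simp [toLayer]

lemma toLayer_inj {ℓ ℓ' : Fin p} {x y : Board d n} :
    toLayer n ℓ x = toLayer n ℓ' y ↔ ℓ = ℓ' ∧ x = y := by
  refine ⟨fun h => ⟨Fin.ext ?_, funext fun i => Fin.ext ?_⟩, fun ⟨hℓ, hxy⟩ => hℓ ▸ hxy ▸ rfl⟩
  · rw [← toLayer_last ℓ x, ← toLayer_last ℓ' y, h]
  · rw [← toLayer_castSucc ℓ x, ← toLayer_castSucc ℓ' y, h]

lemma val_apply_last_lt (z : Board (d + 1) (Fin.snoc n p)) : (z (Fin.last d)).val < p := by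
  simpa using (z (Fin.last d)).isLt

lemma exists_toLayer_eq (z : Board (d + 1) (Fin.snoc n p)) (ℓ : Fin p)
    (hz : (z (Fin.last d)).val = ℓ.val) : ∃ x, toLayer n ℓ x = z := by
  refine ⟨fun i => Fin.cast (by simp) (z i.castSucc), funext fun i => Fin.ext ?_⟩
  induction i using Fin.lastCases with
  | last => rw [toLayer_last, hz]
  | cast i => simp

lemma toLayer_apply_eq {ℓ ℓ' : Fin p} {x y : Board d n} {k : Fin (d + 1)}
    (hlast : k = Fin.last d → ℓ = ℓ') (hcast : ∀ i, k = i.castSucc → x i = y i) :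
    toLayer n ℓ x k = toLayer n ℓ' y k := by
  apply Fin.ext
  induction k using Fin.lastCases with
  | last => rw [toLayer_last, toLayer_last, hlast rfl]
  | cast i => rw [toLayer_castSucc, toLayer_castSucc, hcast i rfl]

lemma Kd.adj_toLayer (ℓ : Fin p) {x y : Board d n} (h : (Kd d n).Adj x y) :
    (Kd (d + 1) (Fin.snoc n p)).Adj (toLayer n ℓ x) (toLayer n ℓ y) := by
  obtain ⟨i, j, hij, hi, hj, hrest⟩ := h
  refine ⟨i.castSucc, j.castSucc, Fin.castSucc_injective _ |>.ne hij, by simpa, by simpa,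
    fun k hki hkj => toLayer_apply_eq (fun _ => rfl) ?_⟩
  rintro l rfl
  exact hrest l (ne_of_apply_ne _ hki) (ne_of_apply_ne _ hkj)

lemma twoApart_toLayer {ℓ : Fin p} {x y : Board d n} (h : TwoApart x y) :
    TwoApart (toLayer n ℓ x) (toLayer n ℓ y) := by
  obtain ⟨j, hj, hrest⟩ := h
  refine ⟨j.castSucc, by simpa, fun k hk => toLayer_apply_eq (fun _ => rfl) ?_⟩
  rintro l rfl
  exact hrest l (ne_of_apply_ne _ hk)

lemma Kd.adj_toLayer_of_twoApart {ℓ ℓ' : Fin p} (hℓ : Nat.dist ℓ ℓ' = 1)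
    {x y : Board d n} (h : TwoApart x y) :
    (Kd (d + 1) (Fin.snoc n p)).Adj (toLayer n ℓ x) (toLayer n ℓ' y) := by
  obtain ⟨j, hj, hrest⟩ := h
  refine ⟨Fin.last d, j.castSucc, (Fin.castSucc_lt_last j).ne', by simpa, by simpa,
    fun k hk hkj => toLayer_apply_eq (absurd · hk) ?_⟩
  rintro l rfl
  exact hrest l (ne_of_apply_ne _ hkj)

def toLayerHom (n : Fin d → ℕ) (ℓ : Fin p) : Kd d n →g Kd (d + 1) (Fin.snoc n p) :=
  ⟨toLayer n ℓ, Kd.adj_toLayer ℓ⟩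

lemma sym2_map_toLayer_inj {ℓ ℓ' : Fin p} {e e' : Sym2 (Board d n)}
    (h : e.map (toLayer n ℓ) = e'.map (toLayer n ℓ')) : ℓ = ℓ' ∧ e = e' := by
  induction e using Sym2.ind
  induction e' using Sym2.ind
  simp only [Sym2.map_mk, Sym2.eq_iff, toLayer_inj] at h ⊢
  tauto

lemma image_sym2_map_toLayer_inter_eq_empty {ℓ ℓ' : Fin p} {S T : Set (Sym2 (Board d n))}
    (h : ℓ ≠ ℓ' ∨ S ∩ T = ∅) :
    Sym2.map (toLayer n ℓ) '' S ∩ Sym2.map (toLayer n ℓ') '' T = ∅ := by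
  rw [Set.eq_empty_iff_forall_notMem]
  rintro _ ⟨⟨e, he, rfl⟩, e', he', heq⟩
  obtain ⟨rfl, rfl⟩ := sym2_map_toLayer_inj heq
  exact h.elim (· rfl) fun h => h.subset ⟨he, he'⟩

variable {v : Board d n} {w : (Kd d n).Walk v v}

lemma isCycle_map_toLayerHom (hw : w.IsCycle) (ℓ : Fin p) :
    (w.map (toLayerHom n ℓ)).IsCycle :=
  hw.map fun _ _ h => (toLayer_inj.mp h).2

lemma mem_support_map_toLayerHom (hw : w.IsHamiltonianCycle)
    (ℓ : Fin p) (z : Board (d + 1) (Fin.snoc n p)) :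
    z ∈ (w.map (toLayerHom n ℓ)).support ↔ (z (Fin.last d)).val = ℓ := by
  rw [Walk.support_map]
  constructor
  · intro hz
    obtain ⟨x, -, rfl⟩ := List.mem_map.mp hz
    exact toLayer_last ℓ x
  · intro hz
    obtain ⟨x, rfl⟩ := exists_toLayer_eq z ℓ hz
    exact List.mem_map_of_mem (hw.mem_support x)

lemma sym2_map_mem_edges_map_toLayerHom (ℓ : Fin p) {e : Sym2 (Board d n)} (he : e ∈ w.edges) :
    e.map (toLayer n ℓ) ∈ (w.map (toLayerHom n ℓ)).edges := by
  rw [Walk.edges_map]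
  exact List.mem_map_of_mem he

lemma isSite_toLayer {u : Board (d + 1) (Fin.snoc n p)}
    {M : (Kd (d + 1) (Fin.snoc n p)).Walk u u} {a₁ a₂ c₁ c₂ : Board d n}
    (hs : IsSite w a₁ a₂ c₁ c₂) {ℓ : Fin p} (ha : s(a₁, a₂).map (toLayer n ℓ) ∈ M.edges)
    (hc : s(c₁, c₂).map (toLayer n ℓ) ∈ M.edges) :
    IsSite M (toLayer n ℓ a₁) (toLayer n ℓ a₂) (toLayer n ℓ c₁) (toLayer n ℓ c₂) := by
  obtain ⟨-, -, hac, hta₁, hta₂⟩ := hs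
  exact ⟨ha, hc, fun h => hac (sym2_map_toLayer_inj (e := s(a₁, a₂)) (e' := s(c₁, c₂)) h).2,
    twoApart_toLayer hta₁, twoApart_toLayer hta₂⟩

end Layers

section Stacking

variable {d q : ℕ} {n : Fin d → ℕ} {v : Board d n} {w : (Kd d n).Walk v v}
  {a₁ a₂ c₁ c₂ : Board d n}

/-- The tour built on layers `0, …, ℓ`: besides the copies of the edges of `w` off the site in
the bottom and top layers, it keeps the top copy of `a₁a₂`, at which the next layer is merged in. -/
def IsStackedCycle (w : (Kd d n).Walk v v) (a₁ a₂ c₁ c₂ : Board d n) (ℓ : Fin (q + 1))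
    {u : Board (d + 1) (Fin.snoc n (q + 1))} (M : (Kd (d + 1) (Fin.snoc n (q + 1))).Walk u u) :
    Prop :=
  M.IsCycle ∧ (∀ z, z ∈ M.support ↔ (z (Fin.last d)).val ≤ ℓ) ∧
    s(a₁, a₂).map (toLayer n ℓ) ∈ M.edges ∧
    ∀ e ∈ w.edges, e ≠ s(a₁, a₂) → e ≠ s(c₁, c₂) →
      e.map (toLayer n 0) ∈ M.edges ∧ e.map (toLayer n ℓ) ∈ M.edges

lemma isStackedCycle_zero (hw : w.IsHamiltonianCycle) (ha : s(a₁, a₂) ∈ w.edges) :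
    IsStackedCycle (q := q) w a₁ a₂ c₁ c₂ 0 (w.map (toLayerHom n 0)) := by
  refine ⟨isCycle_map_toLayerHom hw.isCycle 0, fun z => ?_,
    sym2_map_mem_edges_map_toLayerHom 0 ha, fun e he _ _ => ?_⟩
  · rw [mem_support_map_toLayerHom hw, Fin.val_zero, Nat.le_zero]
  · exact ⟨sym2_map_mem_edges_map_toLayerHom 0 he, sym2_map_mem_edges_map_toLayerHom 0 he⟩

lemma IsStackedCycle.succ (hw : w.IsHamiltonianCycle) (hs : IsSite w a₁ a₂ c₁ c₂) {i : Fin q}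
    {u : Board (d + 1) (Fin.snoc n (q + 1))} {M : (Kd (d + 1) (Fin.snoc n (q + 1))).Walk u u}
    (hM : IsStackedCycle w a₁ a₂ c₁ c₂ i.castSucc M) :
    ∃ (u' : Board (d + 1) (Fin.snoc n (q + 1)))
      (M' : (Kd (d + 1) (Fin.snoc n (q + 1))).Walk u' u'),
      IsStackedCycle w a₁ a₂ c₁ c₂ i.succ M' := by
  obtain ⟨ha, hc, hac, hta₁, hta₂⟩ := hs
  obtain ⟨hM, hMsupp, hMa, hMe⟩ := hM
  have hsupp := mem_support_map_toLayerHom hw i.succ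
  have hlayer : Nat.dist i.castSucc i.succ = 1 := by simp [Nat.dist]
  obtain ⟨M', hM', hM'supp, hMedges, hDedges⟩ := hM.exists_isCycle_merge
    (isCycle_map_toLayerHom hw.isCycle i.succ)
    (fun z hzM hzD => by
      have h₁ := (hMsupp z).mp hzM
      have h₂ := (hsupp z).mp hzD
      rw [Fin.val_castSucc] at h₁
      rw [Fin.val_succ] at h₂
      omega)
    hMa (sym2_map_mem_edges_map_toLayerHom i.succ hc)
    (Kd.adj_toLayer_of_twoApart hlayer hta₁) (Kd.adj_toLayer_of_twoApart hlayer hta₂)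
  refine ⟨_, M', hM', fun z => ?_, ?_, fun e he hea hec => ⟨?_, ?_⟩⟩
  · rw [hM'supp, hMsupp, hsupp]
    simp only [Fin.val_castSucc, Fin.val_succ]
    omega
  · exact hDedges _ (sym2_map_mem_edges_map_toLayerHom i.succ ha)
      fun h => hac (sym2_map_toLayer_inj (e' := s(c₁, c₂)) h).2
  · exact hMedges _ (hMe e he hea hec).1
      fun h => hea (sym2_map_toLayer_inj (e' := s(a₁, a₂)) h).2
  · exact hDedges _ (sym2_map_mem_edges_map_toLayerHom i.succ he)
      fun h => hec (sym2_map_toLayer_inj (e' := s(c₁, c₂)) h).2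

lemma exists_isStackedCycle (hw : w.IsHamiltonianCycle) (hs : IsSite w a₁ a₂ c₁ c₂)
    (ℓ : Fin (q + 1)) :
    ∃ (u : Board (d + 1) (Fin.snoc n (q + 1)))
      (M : (Kd (d + 1) (Fin.snoc n (q + 1))).Walk u u), IsStackedCycle w a₁ a₂ c₁ c₂ ℓ M := by
  induction ℓ using Fin.induction with
  | zero => exact ⟨_, _, isStackedCycle_zero hw hs.1⟩
  | succ i ih =>
    obtain ⟨_, _, hM⟩ := ih
    exact hM.succ hw hs

end Stacking

/-- If K(n₁,…,n_d) has a bi-sited Hamiltonian cycle then so does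
K(n₁,…,n_d,p) for every p ≥ 1. -/
theorem biSited_extends (d : ℕ) (n : Fin d → ℕ) (h : HasBiSitedTour d n)
    (p : ℕ) (hp : 1 ≤ p) :
    HasBiSitedTour (d + 1) (Fin.snoc n p) := by
  obtain ⟨v, w, hw, a₁, a₂, c₁, c₂, b₁, b₂, e₁, e₂, hA, hB, hAB⟩ := h
  obtain ⟨q, rfl⟩ := Nat.exists_eq_add_of_le' hp
  rcases q.eq_zero_or_pos with rfl | hq
  · have hM := isCycle_map_toLayerHom hw.isCycle (0 : Fin 1)
    refine ⟨_, _, hM.isHamiltonianCycle_of_forall_mem_support fun z =>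
        (mem_support_map_toLayerHom hw 0 z).mpr (Nat.lt_one_iff.mp (val_apply_last_lt z)),
      _, _, _, _, _, _, _, _,
      isSite_toLayer hA (sym2_map_mem_edges_map_toLayerHom 0 hA.1)
        (sym2_map_mem_edges_map_toLayerHom 0 hA.2.1),
      isSite_toLayer hB (sym2_map_mem_edges_map_toLayerHom 0 hB.1)
        (sym2_map_mem_edges_map_toLayerHom 0 hB.2.1), ?_⟩
    simpa only [Set.image_pair, Sym2.map_mk] using
      image_sym2_map_toLayer_inter_eq_empty (ℓ := 0) (ℓ' := 0) (Or.inr hAB)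
  · have hdisj := Set.disjoint_iff_inter_eq_empty.mpr hAB
    obtain ⟨u, M, hM, hsupp, -, hedges⟩ := exists_isStackedCycle hw hA (Fin.last q)
    have hb := hedges _ hB.1 (hdisj.ne_of_mem (by simp) (by simp)).symm
      (hdisj.ne_of_mem (by simp) (by simp)).symm
    have he := hedges _ hB.2.1 (hdisj.ne_of_mem (by simp) (by simp)).symm
      (hdisj.ne_of_mem (by simp) (by simp)).symm
    refine ⟨u, M, hM.isHamiltonianCycle_of_forall_mem_support fun z =>
        (hsupp z).mpr (Nat.le_of_lt_succ (val_apply_last_lt z)),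
      _, _, _, _, _, _, _, _, isSite_toLayer hB hb.1 he.1, isSite_toLayer hB hb.2 he.2, ?_⟩
    simpa only [Set.image_pair, Sym2.map_mk] using
      image_sym2_map_toLayer_inter_eq_empty (S := {s(b₁, b₂), s(e₁, e₂)})
        (T := {s(b₁, b₂), s(e₁, e₂)}) (Or.inl (Fin.ext_iff.not.mpr hq.ne))
end

section
/- The generalized (a,b)-knight's graph K_{a,b}(n,m) is disconnected whenever gcd(a+b, a−b) > 1 (assuming 0 < a < b and the board has at least 2 vertices). -/
/-!
If `d` divides both `a + b` and `b - a`, then `a ≡ b ≡ -a (mod d)`, so every knight move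
changes the coordinate sum `i + j` by `±a ± b ≡ 0 (mod d)`. The cells `(0,0)` and `(1,0)`
(or `(0,1)`) have coordinate sums `0` and `1`, which differ modulo `d = gcd(a + b, b - a) > 1`,
so they lie in different components.
-/

/-- Generalized (a,b)-knight's graph on the board `[n] × [m]`. -/
def Kab (a b n m : ℕ) : SimpleGraph (Fin n × Fin m) where
  Adj u v := u ≠ v ∧
    ((Nat.dist u.1.val v.1.val = a ∧ Nat.dist u.2.val v.2.val = b) ∨
     (Nat.dist u.1.val v.1.val = b ∧ Nat.dist u.2.val v.2.val = a))
  symm := by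
    refine ⟨?_⟩
    rintro u v ⟨hne, (⟨h1, h2⟩ | ⟨h1, h2⟩)⟩
    · exact ⟨hne.symm, Or.inl ⟨by rw [Nat.dist_comm]; exact h1,
        by rw [Nat.dist_comm]; exact h2⟩⟩
    · exact ⟨hne.symm, Or.inr ⟨by rw [Nat.dist_comm]; exact h1,
        by rw [Nat.dist_comm]; exact h2⟩⟩
  loopless := ⟨by rintro u ⟨hne, -⟩; exact hne rfl⟩

theorem SimpleGraph.Reachable.apply_eq_of_forall_adj {V β : Type*} {G : SimpleGraph V}
    {f : V → β} (hf : ∀ u v, G.Adj u v → f u = f v) {u v : V} (h : G.Reachable u v) :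
    f u = f v := by
  obtain ⟨p⟩ := h
  induction p with
  | nil => rfl
  | cons hadj _ ih => exact (hf _ _ hadj).trans ih

theorem Nat.eq_add_or_eq_add_of_dist_eq {x y k : ℕ} (h : Nat.dist x y = k) :
    x = y + k ∨ y = x + k := by
  unfold Nat.dist at h
  omega

theorem Nat.cast_add_eq_of_dist_eq {R : Type*} [CommRing R] {a b x y x' y' : ℕ}
    (hsum : (a + b : R) = 0) (hdiff : (a : R) = b)
    (hx : Nat.dist x x' = a) (hy : Nat.dist y y' = b) :
    ((x + y : ℕ) : R) = ((x' + y' : ℕ) : R) := by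
  rcases Nat.eq_add_or_eq_add_of_dist_eq hx with rfl | rfl <;>
  rcases Nat.eq_add_or_eq_add_of_dist_eq hy with rfl | rfl <;>
  push_cast
  · linear_combination hsum
  · linear_combination hdiff
  · linear_combination -hdiff
  · linear_combination -hsum

theorem Kab.cast_add_eq_of_adj {R : Type*} [CommRing R] {a b n m : ℕ}
    (hsum : (a + b : R) = 0) (hdiff : (a : R) = b) {u v : Fin n × Fin m}
    (h : (Kab a b n m).Adj u v) :
    ((u.1.val + u.2.val : ℕ) : R) = ((v.1.val + v.2.val : ℕ) : R) := by
  obtain ⟨-, ⟨hx, hy⟩ | ⟨hx, hy⟩⟩ := h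
  · exact Nat.cast_add_eq_of_dist_eq hsum hdiff hx hy
  · exact Nat.cast_add_eq_of_dist_eq (by rwa [add_comm]) hdiff.symm hx hy

theorem Fin.exists_prod_val_add_eq_zero_and_one {n m : ℕ} (h : 1 < n * m) :
    ∃ u v : Fin n × Fin m, u.1.val + u.2.val = 0 ∧ v.1.val + v.2.val = 1 := by
  have hn : 0 < n := Nat.pos_of_ne_zero (by rintro rfl; simp at h)
  have hm : 0 < m := Nat.pos_of_ne_zero (by rintro rfl; simp at h)
  rcases Nat.lt_or_ge 1 n with hn2 | hn1
  · exact ⟨(⟨0, hn⟩, ⟨0, hm⟩), (⟨1, hn2⟩, ⟨0, hm⟩), rfl, rfl⟩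
  · have hm2 : 1 < m := by nlinarith
    exact ⟨(⟨0, hn⟩, ⟨0, hm⟩), (⟨0, hn⟩, ⟨1, hm2⟩), rfl, rfl⟩

theorem Kab_disconnected_of_gcd_general (a b n m : ℕ) (hab : a < b)
    (hgcd : 1 < Nat.gcd (a + b) (b - a)) (hboard : 1 < n * m) :
    ¬ (Kab a b n m).Connected := by
  set d := Nat.gcd (a + b) (b - a)
  have : Fact (1 < d) := ⟨hgcd⟩
  have hsum : (a + b : ZMod d) = 0 := by
    exact_mod_cast (ZMod.natCast_eq_zero_iff _ _).mpr (Nat.gcd_dvd_left _ _)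
  have hdiff : (a : ZMod d) = b :=
    (ZMod.natCast_eq_natCast_iff _ _ _).mpr
      ((Nat.modEq_iff_dvd' hab.le).mpr (Nat.gcd_dvd_right _ _))
  intro hconn
  obtain ⟨u, v, hu, hv⟩ := Fin.exists_prod_val_add_eq_zero_and_one hboard
  have hclass := (hconn.preconnected u v).apply_eq_of_forall_adj
    (fun _ _ => Kab.cast_add_eq_of_adj hsum hdiff)
  rw [hu, hv, Nat.cast_zero, Nat.cast_one] at hclass
  exact zero_ne_one hclass

/-- If gcd(a+b, b−a) > 1 then the (a,b)-knight's graph on a board with at least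
two vertices is disconnected. -/
theorem Kab_disconnected_of_gcd (a b n m : ℕ) (ha : 0 < a) (hab : a < b)
    (hgcd : 1 < Nat.gcd (a + b) (b - a)) (hboard : 1 < n * m) :
    ¬ (Kab a b n m).Connected :=
  Kab_disconnected_of_gcd_general a b n m hab hgcd hboard
end
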